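/- arXiv:1509.08070 — 4 statements merged into one kernel-verified Lean document; each statement's English description precedes it below -/
import Mathlib

section
/- Let x_5 < x_4 < x_3 < x_2 < x_1 < x_0 be reals in [a,b] and let f ∈ Δ³[a,b]. Set Δ_j := [x_j, x_{j-1}, x_{j-2}, x_{j-3}; f] for j = 3, 4, 5. Then (x_1−x_4)(x_2−x_3)·Δ_4 ≤ (x_2−x_5)(x_3−x_4)·Δ_5 + (x_0−x_3)(x_1−x_2)·Δ_3 + 2·√( (x_2−x_5)(x_2−x_4)·Δ_5 · (x_0−x_3)(x_1−x_3)·Δ_3 ). -/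
/-- Third-order divided difference `[t0, t1, t2, t3; f]` at four (distinct) points. -/
noncomputable def dd4 (f : ℝ → ℝ) (t0 t1 t2 t3 : ℝ) : ℝ :=
  f t0 / ((t0 - t1) * (t0 - t2) * (t0 - t3)) +
  f t1 / ((t1 - t0) * (t1 - t2) * (t1 - t3)) +
  f t2 / ((t2 - t0) * (t2 - t1) * (t2 - t3)) +
  f t3 / ((t3 - t0) * (t3 - t1) * (t3 - t2))

/-- `f ∈ Δ³[a,b]`: `f` is continuous on `[a,b]` and all its third divided differences
over four distinct points of `[a,b]` are nonnegative (3-monotone). -/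
def Delta3 (a b : ℝ) (f : ℝ → ℝ) : Prop :=
  ContinuousOn f (Set.Icc a b) ∧
  ∀ t0 t1 t2 t3 : ℝ, t0 ∈ Set.Icc a b → t1 ∈ Set.Icc a b →
    t2 ∈ Set.Icc a b → t3 ∈ Set.Icc a b →
    t0 ≠ t1 → t0 ≠ t2 → t0 ≠ t3 → t1 ≠ t2 → t1 ≠ t3 → t2 ≠ t3 →
    0 ≤ dd4 f t0 t1 t2 t3

/-!
Fix `x₃ < t < x₂`. The exchange identity `(r - p)[p,u,v,r] = (r - q)[q,u,v,r] + (q - p)[p,u,v,q]`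
with `q = t` writes `(x₁ - x₄)Δ₄` as `(x₁ - t)A + (t - x₄)B` with `A = [t,x₃,x₂,x₁]`,
`B = [x₄,x₃,x₂,t]`; applied to `Δ₃` and `Δ₅`, again with `q = t`, it gives `(t - x₃)A ≤ (x₀ - x₃)Δ₃`
and `(x₂ - t)B ≤ (x₂ - x₅)Δ₅`, the remainders being nonnegative third divided differences. This
yields `c (x₂ - t)(t - x₃) ≤ P (t - x₃) + Q (x₂ - t)` for every such `t`, where
`c = (x₁ - x₄)Δ₄ + (x₂ - x₅)Δ₅ + (x₀ - x₃)Δ₃` and `P`, `Q` are the two factors under the square root.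
Since `inf_t (P / (x₂ - t) + Q / (t - x₃)) = (√P + √Q)² / (x₂ - x₃)`, the claim follows.
-/

open Filter Topology

noncomputable def dd3 (f : ℝ → ℝ) (t0 t1 t2 : ℝ) : ℝ :=
  f t0 / ((t0 - t1) * (t0 - t2)) + f t1 / ((t1 - t0) * (t1 - t2)) + f t2 / ((t2 - t0) * (t2 - t1))

theorem dd3_rotate (f : ℝ → ℝ) (t0 t1 t2 : ℝ) : dd3 f t1 t2 t0 = dd3 f t0 t1 t2 := by
  unfold dd3; ring

theorem dd4_rotate (f : ℝ → ℝ) (t0 t1 t2 t3 : ℝ) : dd4 f t1 t2 t3 t0 = dd4 f t0 t1 t2 t3 := by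
  unfold dd4; ring

theorem sub_mul_dd4 (f : ℝ → ℝ) {t0 t1 t2 t3 : ℝ} (h01 : t0 ≠ t1) (h02 : t0 ≠ t2)
    (h03 : t0 ≠ t3) (h12 : t1 ≠ t2) (h13 : t1 ≠ t3) (h23 : t2 ≠ t3) :
    (t3 - t0) * dd4 f t0 t1 t2 t3 = dd3 f t1 t2 t3 - dd3 f t0 t1 t2 := by
  unfold dd4 dd3
  field_simp [sub_ne_zero.2 h01, sub_ne_zero.2 h02, sub_ne_zero.2 h03, sub_ne_zero.2 h12,
    sub_ne_zero.2 h13, sub_ne_zero.2 h23]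
  ring

theorem sub_mul_dd4_eq_add (f : ℝ → ℝ) {p q r u v : ℝ} (hpq : p ≠ q) (hpr : p ≠ r)
    (hqr : q ≠ r) (hpu : p ≠ u) (hpv : p ≠ v) (hqu : q ≠ u) (hqv : q ≠ v) (hru : r ≠ u)
    (hrv : r ≠ v) (huv : u ≠ v) :
    (r - p) * dd4 f p u v r = (r - q) * dd4 f q u v r + (q - p) * dd4 f p u v q := by
  have hpr' := sub_mul_dd4 f hpu hpv hpr huv hru.symm hrv.symm
  have hqr' := sub_mul_dd4 f hqu hqv hqr huv hru.symm hrv.symm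
  have hpq' := sub_mul_dd4 f hpu hpv hpq huv hqu.symm hqv.symm
  rw [hpr', hqr', hpq', dd3_rotate f q u v]
  ring

theorem Delta3.dd4_nonneg {a b : ℝ} {f : ℝ → ℝ} (hf : Delta3 a b f) {t0 t1 t2 t3 : ℝ}
    (ha : a ≤ t0) (h01 : t0 < t1) (h12 : t1 < t2) (h23 : t2 < t3) (hb : t3 ≤ b) :
    0 ≤ dd4 f t0 t1 t2 t3 :=
  hf.2 t0 t1 t2 t3 ⟨ha, by linarith⟩ ⟨by linarith, by linarith⟩ ⟨by linarith, by linarith⟩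
    ⟨by linarith, hb⟩ h01.ne (h01.trans h12).ne (h01.trans (h12.trans h23)).ne h12.ne
    (h12.trans h23).ne h23.ne

theorem Delta3.sub_mul_dd4_mul_le {a b : ℝ} {f : ℝ → ℝ} (hf : Delta3 a b f)
    {x0 x1 x2 x3 x4 x5 t : ℝ} (ha : a ≤ x5) (h54 : x5 < x4) (h43 : x4 < x3) (h3t : x3 < t)
    (ht2 : t < x2) (h21 : x2 < x1) (h10 : x1 < x0) (hb : x0 ≤ b) :
    (x1 - x4) * dd4 f x4 x3 x2 x1 * ((x2 - t) * (t - x3)) ≤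
      (x1 - t) * (x2 - t) * ((x0 - x3) * dd4 f x3 x2 x1 x0) +
      (t - x4) * (t - x3) * ((x2 - x5) * dd4 f x5 x4 x3 x2) := by
  have h4 : (x1 - x4) * dd4 f x4 x3 x2 x1 =
      (x1 - t) * dd4 f t x3 x2 x1 + (t - x4) * dd4 f x4 x3 x2 t := by
    apply sub_mul_dd4_eq_add <;> intro h <;> linarith
  have h3 : (x0 - x3) * dd4 f x3 x2 x1 x0 =
      (x0 - t) * dd4 f t x2 x1 x0 + (t - x3) * dd4 f t x3 x2 x1 := by
    rw [← dd4_rotate f t x3 x2 x1]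
    apply sub_mul_dd4_eq_add <;> intro h <;> linarith
  have h5 : (x2 - x5) * dd4 f x5 x4 x3 x2 =
      (x2 - t) * dd4 f x4 x3 x2 t + (t - x5) * dd4 f x5 x4 x3 t := by
    rw [dd4_rotate f t x4 x3 x2]
    apply sub_mul_dd4_eq_add <;> intro h <;> linarith
  have hC : 0 ≤ (x1 - t) * (x2 - t) * (x0 - t) * dd4 f t x2 x1 x0 := by
    have := hf.dd4_nonneg (ha.trans (by linarith)) ht2 h21 h10 hb
    exact mul_nonneg (mul_nonneg (mul_nonneg (by linarith) (by linarith)) (by linarith)) this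
  have hE : 0 ≤ (t - x4) * (t - x3) * (t - x5) * dd4 f x5 x4 x3 t := by
    have := hf.dd4_nonneg ha h54 h43 h3t (by linarith)
    exact mul_nonneg (mul_nonneg (mul_nonneg (by linarith) (by linarith)) (by linarith)) this
  linear_combination ((x2 - t) * (t - x3)) * h4 - ((x1 - t) * (x2 - t)) * h3 -
    ((t - x4) * (t - x3)) * h5 + hC + hE

theorem mul_sub_le_sq_of_forall_mem_Ioo {s r c p q : ℝ} (hsr : s < r) (hp : 0 ≤ p) (hq : 0 ≤ q)
    (h : ∀ t ∈ Set.Ioo s r, c * ((r - t) * (t - s)) ≤ p ^ 2 * (t - s) + q ^ 2 * (r - t)) :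
    c * (r - s) ≤ (p + q) ^ 2 := by
  have hδ : ∀ δ > 0, c * (r - s) ≤ (p + q) * (p + q + 2 * δ) := by
    intro δ hδ
    have hm : 0 < p + q + 2 * δ := by positivity
    have hL : 0 < r - s := sub_pos.2 hsr
    -- near-optimal split: `r - t` and `t - s` proportional to `p + δ` and `q + δ`
    set m := p + q + 2 * δ
    obtain ⟨A, hA, hAm⟩ : ∃ A, 0 < A ∧ A * m = (r - s) * (p + δ) :=
      ⟨(r - s) * (p + δ) / m, by positivity, div_mul_cancel₀ _ hm.ne'⟩
    obtain ⟨B, hB, hBm⟩ : ∃ B, 0 < B ∧ B * m = (r - s) * (q + δ) :=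
      ⟨(r - s) * (q + δ) / m, by positivity, div_mul_cancel₀ _ hm.ne'⟩
    have hAB : A + B = r - s := by
      apply mul_right_cancel₀ hm.ne'
      linear_combination hAm + hBm
    have ht := h (s + B) ⟨by linarith, by linarith⟩
    rw [show r - (s + B) = A by linarith, add_sub_cancel_left] at ht
    have hX : 0 < A * (q + δ) := by positivity
    refine le_of_mul_le_mul_right ?_ hX
    calc c * (r - s) * (A * (q + δ))
      _ = c * (A * B) * m := by linear_combination (-(c * A)) * hBm
      _ ≤ (p ^ 2 * B + q ^ 2 * A) * m := by gcongr
      _ ≤ (p * (p + δ) * B + q * (q + δ) * A) * m := by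
        gcongr
        · nlinarith
        · nlinarith
      _ = (p + q) * m * (A * (q + δ)) := by
        linear_combination (p * (p + δ)) * hBm - (p * (q + δ)) * hAm
  have hlim : Tendsto (fun δ => (p + q) * (p + q + 2 * δ)) (𝓝[>] 0) (𝓝 ((p + q) ^ 2)) := by
    have : Continuous fun δ : ℝ => (p + q) * (p + q + 2 * δ) := by fun_prop
    simpa [sq] using (this.tendsto 0).mono_left nhdsWithin_le_nhds
  exact ge_of_tendsto hlim (eventually_nhdsWithin_of_forall hδ)

theorem statement2_general (a b : ℝ) (x0 x1 x2 x3 x4 x5 : ℝ)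
    (h54 : x5 < x4) (h43 : x4 < x3) (h32 : x3 < x2) (h21 : x2 < x1) (h10 : x1 < x0)
    (hm0 : x0 ∈ Set.Icc a b) (hm5 : x5 ∈ Set.Icc a b)
    (f : ℝ → ℝ) (hf : Delta3 a b f) :
    (x1 - x4) * (x2 - x3) * dd4 f x4 x3 x2 x1 ≤
      (x2 - x5) * (x3 - x4) * dd4 f x5 x4 x3 x2 +
      (x0 - x3) * (x1 - x2) * dd4 f x3 x2 x1 x0 +
      2 * Real.sqrt ((x2 - x5) * (x2 - x4) * dd4 f x5 x4 x3 x2 *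
        ((x0 - x3) * (x1 - x3) * dd4 f x3 x2 x1 x0)) := by
  set P := (x2 - x5) * (x2 - x4) * dd4 f x5 x4 x3 x2
  set Q := (x0 - x3) * (x1 - x3) * dd4 f x3 x2 x1 x0
  have hP : 0 ≤ P := mul_nonneg (mul_nonneg (by linarith) (by linarith))
    (hf.dd4_nonneg hm5.1 h54 h43 h32 (by linarith [hm0.2]))
  have hQ : 0 ≤ Q := mul_nonneg (mul_nonneg (by linarith) (by linarith))
    (hf.dd4_nonneg (by linarith [hm5.1]) h32 h21 h10 hm0.2)
  have hopt := mul_sub_le_sq_of_forall_mem_Ioo h32 (Real.sqrt_nonneg P) (Real.sqrt_nonneg Q)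
    (c := (x1 - x4) * dd4 f x4 x3 x2 x1 + (x2 - x5) * dd4 f x5 x4 x3 x2 +
      (x0 - x3) * dd4 f x3 x2 x1 x0) fun t ⟨h3t, ht2⟩ => by
    rw [Real.sq_sqrt hP, Real.sq_sqrt hQ]
    linarith [hf.sub_mul_dd4_mul_le hm5.1 h54 h43 h3t ht2 h21 h10 hm0.2]
  rw [Real.sqrt_mul hP]
  linear_combination hopt + Real.sq_sqrt hP + Real.sq_sqrt hQ

/-- Lemma 1, inequality (9): for a 3-monotone `f` and six ordered points
`x₅ < x₄ < x₃ < x₂ < x₁ < x₀` in `[a,b]`, with `Δⱼ := [xⱼ, xⱼ₋₁, xⱼ₋₂, xⱼ₋₃; f]`,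
`(x₁−x₄)(x₂−x₃)Δ₄ ≤ (x₂−x₅)(x₃−x₄)Δ₅ + (x₀−x₃)(x₁−x₂)Δ₃ + 2√((x₂−x₅)(x₂−x₄)Δ₅(x₀−x₃)(x₁−x₃)Δ₃)`. -/
theorem statement2 (a b : ℝ) (x0 x1 x2 x3 x4 x5 : ℝ)
    (h54 : x5 < x4) (h43 : x4 < x3) (h32 : x3 < x2) (h21 : x2 < x1) (h10 : x1 < x0)
    (hm0 : x0 ∈ Set.Icc a b) (hm1 : x1 ∈ Set.Icc a b) (hm2 : x2 ∈ Set.Icc a b)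
    (hm3 : x3 ∈ Set.Icc a b) (hm4 : x4 ∈ Set.Icc a b) (hm5 : x5 ∈ Set.Icc a b)
    (f : ℝ → ℝ) (hf : Delta3 a b f) :
    (x1 - x4) * (x2 - x3) * dd4 f x4 x3 x2 x1 ≤
      (x2 - x5) * (x3 - x4) * dd4 f x5 x4 x3 x2 +
      (x0 - x3) * (x1 - x2) * dd4 f x3 x2 x1 x0 +
      2 * Real.sqrt ((x2 - x5) * (x2 - x4) * dd4 f x5 x4 x3 x2 *
        ((x0 - x3) * (x1 - x3) * dd4 f x3 x2 x1 x0)) :=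
  statement2_general a b x0 x1 x2 x3 x4 x5 h54 h43 h32 h21 h10 hm0 hm5 f hf
end

section
/- Let h > 0 and let x_j := x_0 − j·h for j = 0,…,5 (equidistant points, x_5 < x_4 < … < x_0) lie in [a,b], and let f ∈ Δ³[a,b]. Set Δ_j := [x_j, x_{j-1}, x_{j-2}, x_{j-3}; f] for j = 3, 4, 5, and define C := (x_0−x_3)(x_1−x_2)·Δ_3 − (x_2−x_5)·((x_2−x_4) + (x_2−x_3))·Δ_5 and D := (x_2−x_5)(x_3−x_4)·Δ_5 − (x_0−x_3)·((x_2−x_3) + (x_1−x_3))·Δ_3. If Δ_5 ≤ Δ_4 and Δ_3 ≤ Δ_4, then (x_1−x_4)(x_2−x_3)·Δ_4 ≥ max{C, D}. -/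
/-! For equidistant nodes every factor in `C`, `D` and the bound is a multiple of `h`, so the
claim reads `max (3h²Δ₃ - 9h²Δ₅) (3h²Δ₅ - 9h²Δ₃) ≤ 3h²Δ₄`. Both `Δ₃` and `Δ₅` are nonnegative
by 3-monotonicity, so dropping the subtracted term and using `Δ₃, Δ₅ ≤ Δ₄` gives it. -/

theorem Delta3.dd4_nonneg_of_lt {a b : ℝ} {f : ℝ → ℝ} (hf : Delta3 a b f) {t0 t1 t2 t3 : ℝ}
    (h01 : t0 < t1) (h12 : t1 < t2) (h23 : t2 < t3)
    (ht0 : t0 ∈ Set.Icc a b) (ht3 : t3 ∈ Set.Icc a b) : 0 ≤ dd4 f t0 t1 t2 t3 := by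
  have hsub : Set.Icc t0 t3 ⊆ Set.Icc a b := Set.Icc_subset_Icc ht0.1 ht3.2
  exact hf.2 _ _ _ _ ht0 (hsub ⟨h01.le, (h12.trans h23).le⟩) (hsub ⟨(h01.trans h12).le, h23.le⟩)
    ht3 h01.ne (h01.trans h12).ne (h01.trans (h12.trans h23)).ne h12.ne (h12.trans h23).ne h23.ne

theorem statement3_general (a b h : ℝ) (hh : 0 < h) (x0 x1 x2 x3 x4 x5 : ℝ)
    (hx1 : x1 = x0 - h) (hx2 : x2 = x0 - 2 * h) (hx3 : x3 = x0 - 3 * h)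
    (hx4 : x4 = x0 - 4 * h) (hx5 : x5 = x0 - 5 * h)
    (hm0 : x0 ∈ Set.Icc a b) (hm2 : x2 ∈ Set.Icc a b)
    (hm3 : x3 ∈ Set.Icc a b) (hm5 : x5 ∈ Set.Icc a b)
    (f : ℝ → ℝ) (hf : Delta3 a b f)
    (Δ3 Δ4 Δ5 : ℝ)
    (hΔ3 : Δ3 = dd4 f x3 x2 x1 x0)
    (hΔ5 : Δ5 = dd4 f x5 x4 x3 x2)
    (C D : ℝ)
    (hC : C = (x0 - x3) * (x1 - x2) * Δ3 - (x2 - x5) * ((x2 - x4) + (x2 - x3)) * Δ5)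
    (hD : D = (x2 - x5) * (x3 - x4) * Δ5 - (x0 - x3) * ((x2 - x3) + (x1 - x3)) * Δ3)
    (h54 : Δ5 ≤ Δ4) (h34 : Δ3 ≤ Δ4) :
    max C D ≤ (x1 - x4) * (x2 - x3) * Δ4 := by
  subst hx1 hx2 hx3 hx4 hx5
  have hΔ3_nonneg : 0 ≤ Δ3 :=
    hΔ3 ▸ hf.dd4_nonneg_of_lt (by linarith) (by linarith) (by linarith) hm3 hm0
  have hΔ5_nonneg : 0 ≤ Δ5 :=
    hΔ5 ▸ hf.dd4_nonneg_of_lt (by linarith) (by linarith) (by linarith) hm5 hm2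
  have hh2 : 0 < h ^ 2 := by positivity
  refine max_le ?_ ?_
  · calc C = 3 * h ^ 2 * Δ3 - 9 * h ^ 2 * Δ5 := by rw [hC]; ring
      _ ≤ 3 * h ^ 2 * Δ4 := by nlinarith
      _ = _ := by ring
  · calc D = 3 * h ^ 2 * Δ5 - 9 * h ^ 2 * Δ3 := by rw [hD]; ring
      _ ≤ 3 * h ^ 2 * Δ4 := by nlinarith
      _ = _ := by ring

/-- Lemma 1, first inequality of (10), for equidistant points: if
`Δ₅ ≤ Δ₄` and `Δ₃ ≤ Δ₄` then `(x₁−x₄)(x₂−x₃)Δ₄ ≥ max{C, D}`. -/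
theorem statement3 (a b h : ℝ) (hh : 0 < h) (x0 x1 x2 x3 x4 x5 : ℝ)
    (hx1 : x1 = x0 - h) (hx2 : x2 = x0 - 2 * h) (hx3 : x3 = x0 - 3 * h)
    (hx4 : x4 = x0 - 4 * h) (hx5 : x5 = x0 - 5 * h)
    (hm0 : x0 ∈ Set.Icc a b) (hm1 : x1 ∈ Set.Icc a b) (hm2 : x2 ∈ Set.Icc a b)
    (hm3 : x3 ∈ Set.Icc a b) (hm4 : x4 ∈ Set.Icc a b) (hm5 : x5 ∈ Set.Icc a b)
    (f : ℝ → ℝ) (hf : Delta3 a b f)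
    (Δ3 Δ4 Δ5 : ℝ)
    (hΔ3 : Δ3 = dd4 f x3 x2 x1 x0) (hΔ4 : Δ4 = dd4 f x4 x3 x2 x1)
    (hΔ5 : Δ5 = dd4 f x5 x4 x3 x2)
    (C D : ℝ)
    (hC : C = (x0 - x3) * (x1 - x2) * Δ3 - (x2 - x5) * ((x2 - x4) + (x2 - x3)) * Δ5)
    (hD : D = (x2 - x5) * (x3 - x4) * Δ5 - (x0 - x3) * ((x2 - x3) + (x1 - x3)) * Δ3)
    (h54 : Δ5 ≤ Δ4) (h34 : Δ3 ≤ Δ4) :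
    max C D ≤ (x1 - x4) * (x2 - x3) * Δ4 :=
  statement3_general a b h hh x0 x1 x2 x3 x4 x5 hx1 hx2 hx3 hx4 hx5 hm0 hm2 hm3 hm5 f hf Δ3 Δ4 Δ5
    hΔ3 hΔ5 C D hC hD h54 h34
end

section
/- Let n, q ∈ ℕ with 1 ≤ q ≤ n, let a = a_n < a_{n-1} < … < a_1 < a_0 = b be reals, and let g : [a,b] → ℝ. Define the piecewise-polynomial function S_q : [a,b] → ℝ by S_q(x) = L(x; a_q,…,a_0; g) for x ∈ [a_q, b], and S_q(x) = L(x; a_j,…,a_{j-q}; g) for x ∈ [a_j, a_{j-1}) and j = q+1,…,n, where L(x; t_0,…,t_q; g) denotes the Lagrange interpolation polynomial of degree ≤ q to g at the nodes t_0,…,t_q. For j = q,…,n let Ψ_q(x, a_j) := Π_{k=j−q+1}^{j} (x − a_k) if x > a_j and Ψ_q(x, a_j) := 0 if x ≤ a_j. Then for all x ∈ [a,b]: S_q(x) = L(x; a_n,…,a_{n-q}; g) + Σ_{j=q}^{n-1} [a_{j+1}, a_j, …, a_{j-q}; g]·(a_{j-q} − a_{j+1})·Ψ_q(x, a_j). 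-/
/-!
On `[a_{j+1}, a_j]` the spline switches from the interpolant `L_j` at `a_j, …, a_{j-q}` to the
interpolant `L_{j+1}` at `a_{j+1}, …, a_{j+1-q}`. Comparing the two Lagrange formulas node by node
gives the Newton-type identity
`L_j(x) - L_{j+1}(x) = [a_{j+1}, …, a_{j-q}; g] (a_{j-q} - a_{j+1}) ∏_{k=j-q+1}^{j} (x - a_k)`.
If `m` is the first index `≥ q` with `a_m ≤ x`, then `S_q(x) = L_m(x)`, the truncated powers
`Ψ_q(x, a_j)` vanish for `j < m` and equal the full product for `j ≥ m` (at `x = a_j` because the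
product contains the factor `x - a_j`, as `q ≥ 1`), so the sum telescopes to `L_m(x) - L_n(x)`.
-/

/-- Evaluation at `x` of the Lagrange interpolation polynomial of `g`
at the (distinct) nodes `t 0, …, t (m-1)`. -/
noncomputable def lagEval {m : ℕ} (g : ℝ → ℝ) (t : Fin m → ℝ) (x : ℝ) : ℝ :=
  ∑ i, g (t i) * ∏ l ∈ Finset.univ.erase i, ((x - t l) / (t i - t l))

/-- Divided difference `[t 0, …, t (m-1); g]` at `m` (distinct) points. -/
noncomputable def divDiff {m : ℕ} (g : ℝ → ℝ) (t : Fin m → ℝ) : ℝ :=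
  ∑ i, g (t i) / ∏ l ∈ Finset.univ.erase i, (t i - t l)

/-- `Ψ_q(x, a_j) = ∏_{k=j-q+1}^{j} (x - a_k)` for `x > a_j` (and `0` otherwise),
extended by `Ψ_q(·, a_{q-1}) ≡ 0`. -/
noncomputable def PsiQ (a : ℕ → ℝ) (q j : ℕ) (x : ℝ) : ℝ :=
  if q ≤ j ∧ a j < x then ∏ k ∈ Finset.Icc (j - q + 1) j, (x - a k) else 0

open Finset

/- `lagEval` and `divDiff` with the nodes indexed by a finset, so that the node sets of
neighbouring pieces differ by a single `insert`. -/
noncomputable def lagEvalOn {ι : Type*} [DecidableEq ι] (g : ℝ → ℝ) (s : Finset ι) (t : ι → ℝ)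
    (x : ℝ) : ℝ :=
  ∑ i ∈ s, g (t i) * ∏ l ∈ s.erase i, ((x - t l) / (t i - t l))

noncomputable def divDiffOn {ι : Type*} [DecidableEq ι] (g : ℝ → ℝ) (s : Finset ι) (t : ι → ℝ) :
    ℝ :=
  ∑ i ∈ s, g (t i) / ∏ l ∈ s.erase i, (t i - t l)

section
variable {ι : Type*} [DecidableEq ι] {m : ℕ} {e : Fin m → ι}

lemma lagEval_comp_eq_lagEvalOn (g : ℝ → ℝ) (he : Function.Injective e) (t : ι → ℝ) (x : ℝ) :
    lagEval g (fun i => t (e i)) x = lagEvalOn g (univ.image e) t x := by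
  rw [lagEvalOn, sum_image he.injOn]
  refine sum_congr rfl fun i _ => ?_
  rw [← image_erase he, prod_image he.injOn]

lemma divDiff_comp_eq_divDiffOn (g : ℝ → ℝ) (he : Function.Injective e) (t : ι → ℝ) :
    divDiff g (fun i => t (e i)) = divDiffOn g (univ.image e) t := by
  rw [divDiffOn, sum_image he.injOn]
  refine sum_congr rfl fun i _ => ?_
  rw [← image_erase he, prod_image he.injOn]
end

section
variable {m j : ℕ}

lemma injective_sub_val (h : m ≤ j + 1) : Function.Injective fun i : Fin m => j - (i : ℕ) :=
  fun i k hik => Fin.ext (by have := i.isLt; have := k.isLt; simp only at hik; omega)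

lemma image_sub_val_univ (h : m ≤ j + 1) :
    (univ : Finset (Fin m)).image (fun i : Fin m => j - (i : ℕ)) = Icc (j + 1 - m) j := by
  ext k
  simp only [mem_image, mem_univ, true_and, mem_Icc]
  constructor
  · rintro ⟨i, rfl⟩
    omega
  · intro hk
    exact ⟨⟨j - k, by omega⟩, by dsimp only; omega⟩
end

section
variable {ι : Type*} [DecidableEq ι] {r : Finset ι} {t : ι → ℝ} {u v : ι}

lemma summand_insert_sub_summand_insert (g : ℝ → ℝ) (x : ℝ) (hu : u ∉ r) (hv : v ∉ r)
    (huv : u ≠ v) (ht : Set.InjOn t (insert u (insert v r) : Finset ι)) {i : ι} (hi : i ∈ r) :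
    g (t i) * ∏ l ∈ (insert v r).erase i, ((x - t l) / (t i - t l))
        - g (t i) * ∏ l ∈ (insert u r).erase i, ((x - t l) / (t i - t l))
      = g (t i) / (∏ l ∈ (insert u (insert v r)).erase i, (t i - t l)) * (t v - t u)
        * ∏ l ∈ r, (x - t l) := by
  have hne : ∀ l ∈ insert u (insert v r), i ≠ l → t i - t l ≠ 0 := fun l hl hil =>
    sub_ne_zero.2 (ht.ne (by simp [hi]) (mem_coe.2 hl) hil)
  have hiu : i ≠ u := fun h => hu (h ▸ hi)
  have hiv : i ≠ v := fun h => hv (h ▸ hi)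
  have hu_i : u ∉ r.erase i := fun h => hu (mem_of_mem_erase h)
  have hv_i : v ∉ r.erase i := fun h => hv (mem_of_mem_erase h)
  have hW : ∏ l ∈ r.erase i, (t i - t l) ≠ 0 := prod_ne_zero_iff.2 fun l hl =>
    hne l (by simp [mem_of_mem_erase hl]) (ne_of_mem_erase hl).symm
  have htu := hne u (by simp) hiu
  have htv := hne v (by simp) hiv
  simp only [erase_insert_of_ne hiu.symm, erase_insert_of_ne hiv.symm]
  rw [prod_insert hv_i, prod_insert hu_i, prod_insert (by simp [hu_i, huv]),
    prod_insert hv_i, ← mul_prod_erase r (fun l => x - t l) hi, prod_div_distrib]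
  generalize ∏ l ∈ r.erase i, (x - t l) = Q at *
  generalize ∏ l ∈ r.erase i, (t i - t l) = W at *
  field_simp
  ring

lemma lagEvalOn_insert_sub_lagEvalOn_insert (g : ℝ → ℝ) (x : ℝ) (hu : u ∉ r) (hv : v ∉ r)
    (huv : u ≠ v) (ht : Set.InjOn t (insert u (insert v r) : Finset ι)) :
    lagEvalOn g (insert v r) t x - lagEvalOn g (insert u r) t x
      = divDiffOn g (insert u (insert v r)) t * (t v - t u) * ∏ l ∈ r, (x - t l) := by
  have hu' : u ∉ insert v r := by simp [huv, hu]
  have hvu : t v - t u ≠ 0 := sub_ne_zero.2 (ht.ne (by simp) (by simp) huv.symm)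
  have hv_term : g (t v) * ∏ l ∈ r, ((x - t l) / (t v - t l))
      = g (t v) / (∏ l ∈ insert u r, (t v - t l)) * (t v - t u) * ∏ l ∈ r, (x - t l) := by
    rw [prod_insert hu, prod_div_distrib]
    field_simp
  have hu_term : -(g (t u) * ∏ l ∈ r, ((x - t l) / (t u - t l)))
      = g (t u) / (∏ l ∈ insert v r, (t u - t l)) * (t v - t u) * ∏ l ∈ r, (x - t l) := by
    have huv' : t u - t v ≠ 0 := by rwa [← neg_sub, neg_ne_zero]
    rw [prod_insert hv, prod_div_distrib]
    field_simp
    ring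
  have hr_terms := sum_congr rfl fun i hi => summand_insert_sub_summand_insert g x hu hv huv ht hi
  rw [sum_sub_distrib] at hr_terms
  unfold lagEvalOn divDiffOn
  rw [sum_insert hv, sum_insert hu, sum_insert hu', sum_insert hv]
  simp only [erase_insert hv, erase_insert hu, erase_insert hu', erase_insert_of_ne huv]
  rw [add_mul, add_mul, add_mul, add_mul, sum_mul, sum_mul]
  linear_combination hv_term + hu_term + hr_terms
end

lemma lagEval_sub_lagEval_succ (g : ℝ → ℝ) {a : ℕ → ℝ} {q j : ℕ} (hqj : q ≤ j)
    (ha : Set.InjOn a (Icc (j - q) (j + 1) : Finset ℕ)) (x : ℝ) :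
    lagEval g (fun i : Fin (q + 1) => a (j - (i : ℕ))) x
        - lagEval g (fun i : Fin (q + 1) => a (j + 1 - (i : ℕ))) x
      = divDiff g (fun i : Fin (q + 2) => a (j + 1 - (i : ℕ))) * (a (j - q) - a (j + 1))
        * ∏ k ∈ Icc (j - q + 1) j, (x - a k) := by
  rw [lagEval_comp_eq_lagEvalOn g (injective_sub_val (m := q + 1) (by omega)) a,
    lagEval_comp_eq_lagEvalOn g (injective_sub_val (m := q + 1) (j := j + 1) (by omega)) a,
    divDiff_comp_eq_divDiffOn g (injective_sub_val (m := q + 2) (j := j + 1) (by omega)) a,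
    image_sub_val_univ (by omega), image_sub_val_univ (by omega), image_sub_val_univ (by omega)]
  have h₁ : Icc (j + 1 - (q + 1)) j = insert (j - q) (Icc (j - q + 1) j) := by
    ext k; simp only [mem_insert, mem_Icc]; omega
  have h₂ : Icc (j + 1 + 1 - (q + 1)) (j + 1) = insert (j + 1) (Icc (j - q + 1) j) := by
    ext k; simp only [mem_insert, mem_Icc]; omega
  have h₃ : Icc (j + 1 + 1 - (q + 2)) (j + 1)
      = insert (j + 1) (insert (j - q) (Icc (j - q + 1) j)) := by
    ext k; simp only [mem_insert, mem_Icc]; omega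
  rw [h₁, h₂, h₃]
  refine lagEvalOn_insert_sub_lagEvalOn_insert g x (by simp) (by simp) (by omega) ?_
  rwa [← h₃, show j + 1 + 1 - (q + 2) = j - q by omega]

section
variable {a : ℕ → ℝ} {q j : ℕ} {x : ℝ}

lemma PsiQ_eq_zero_of_le (h : x ≤ a j) : PsiQ a q j x = 0 :=
  if_neg fun h' => h.not_gt h'.2

lemma PsiQ_eq_prod_of_le (hq : 1 ≤ q) (hqj : q ≤ j) (h : a j ≤ x) :
    PsiQ a q j x = ∏ k ∈ Icc (j - q + 1) j, (x - a k) := by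
  rcases h.lt_or_eq with h | rfl
  · exact if_pos ⟨hqj, h⟩
  · rw [PsiQ_eq_zero_of_le le_rfl, eq_comm]
    exact prod_eq_zero (mem_Icc.2 ⟨by omega, le_rfl⟩) (sub_self _)

lemma divDiff_mul_PsiQ_eq_lagEval_sub (g : ℝ → ℝ) (hq : 1 ≤ q) (hqj : q ≤ j)
    (ha : Set.InjOn a (Icc (j - q) (j + 1) : Finset ℕ)) (hx : a j ≤ x) :
    divDiff g (fun i : Fin (q + 2) => a (j + 1 - (i : ℕ))) * (a (j - q) - a (j + 1))
        * PsiQ a q j x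
      = lagEval g (fun i : Fin (q + 1) => a (j - (i : ℕ))) x
        - lagEval g (fun i : Fin (q + 1) => a (j + 1 - (i : ℕ))) x := by
  rw [PsiQ_eq_prod_of_le hq hqj hx, lagEval_sub_lagEval_succ g hqj ha]

lemma exists_first_index_le {n : ℕ} (hqn : q ≤ n) (hx : a n ≤ x) :
    ∃ m, q ≤ m ∧ m ≤ n ∧ a m ≤ x ∧ ∀ j ∈ Ico q m, x < a j := by
  have hex : ∃ m, q ≤ m ∧ a m ≤ x := ⟨n, hqn, hx⟩
  obtain ⟨hqm, hmx⟩ := Nat.find_spec hex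
  exact ⟨Nat.find hex, hqm, Nat.find_min' hex ⟨hqn, hx⟩, hmx,
    fun j hj => not_le.1 fun hjx => Nat.find_min hex (mem_Ico.1 hj).2 ⟨(mem_Ico.1 hj).1, hjx⟩⟩
end

/-- First representation of the piecewise Lagrange spline `S_q` by truncated
power functions (Proposition, first form). -/
theorem statement7 (n q : ℕ) (hq : 1 ≤ q) (hqn : q ≤ n) (a : ℕ → ℝ)
    (hdec : ∀ j < n, a (j + 1) < a j) (g : ℝ → ℝ) (S : ℝ → ℝ)
    (hS1 : ∀ x ∈ Set.Icc (a q) (a 0),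
      S x = lagEval g (fun i : Fin (q + 1) => a (q - (i : ℕ))) x)
    (hS2 : ∀ j : ℕ, q + 1 ≤ j → j ≤ n → ∀ x ∈ Set.Ico (a j) (a (j - 1)),
      S x = lagEval g (fun i : Fin (q + 1) => a (j - (i : ℕ))) x) :
    ∀ x ∈ Set.Icc (a n) (a 0),
      S x = lagEval g (fun i : Fin (q + 1) => a (n - (i : ℕ))) x +
        ∑ j ∈ Finset.Ico q n,
          divDiff g (fun i : Fin (q + 2) => a (j + 1 - (i : ℕ))) *
            (a (j - q) - a (j + 1)) * PsiQ a q j x := by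
  intro x hx
  have ha : StrictAntiOn a (Set.Iic n) := strictAntiOn_Iic_of_succ_lt hdec
  set f : ℕ → ℝ := fun j => lagEval g (fun i : Fin (q + 1) => a (j - (i : ℕ))) x
  obtain ⟨m, hqm, hmn, hmx, hxm⟩ := exists_first_index_le hqn hx.1
  have hSm : S x = f m := by
    rcases hqm.eq_or_lt with rfl | hqm
    · exact hS1 x ⟨hmx, hx.2⟩
    · exact hS2 m hqm hmn x ⟨hmx, hxm (m - 1) (mem_Ico.2 ⟨by omega, by omega⟩)⟩
  have hterm : ∀ j ∈ Ico m n, divDiff g (fun i : Fin (q + 2) => a (j + 1 - (i : ℕ))) *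
      (a (j - q) - a (j + 1)) * PsiQ a q j x = f j - f (j + 1) := fun j hj => by
    obtain ⟨hmj, hjn⟩ := mem_Ico.1 hj
    have hinj : Set.InjOn a (Icc (j - q) (j + 1) : Finset ℕ) := ha.injOn.mono <| by
      rw [coe_Icc]; exact Set.Icc_subset_Iic_self.trans (Set.Iic_subset_Iic.2 hjn)
    exact divDiff_mul_PsiQ_eq_lagEval_sub g hq (hqm.trans hmj) hinj
      ((ha.antitoneOn hmn (Set.mem_Iic.2 hjn.le) hmj).trans hmx)
  have hbefore : ∑ j ∈ Ico q m, divDiff g (fun i : Fin (q + 2) => a (j + 1 - (i : ℕ))) *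
      (a (j - q) - a (j + 1)) * PsiQ a q j x = 0 :=
    sum_eq_zero fun j hj => by rw [PsiQ_eq_zero_of_le (hxm j hj).le, mul_zero]
  have htelescope : ∑ j ∈ Ico m n, (f j - f (j + 1)) = f m - f n := by
    rw [← neg_sub, ← sum_Ico_sub f hmn, ← sum_neg_distrib]
    simp only [neg_sub]
  rw [hSm, ← sum_Ico_consecutive _ hqm hmn, hbefore, sum_congr rfl hterm, htelescope]
  ring
end

section
/- Let a < c < b and t_1, t_2, t_3 be reals. Set ĥ_1 := c − a, ĥ_2 := b − c, h̃_1 := (b−t_1) + (b−t_2) + (b−t_3), h̃_2 := (b−t_1)(b−t_2) + (b−t_1)(b−t_3) + (b−t_2)(b−t_3), h̃_3 := (b−t_1)(b−t_2)(b−t_3), and define α := (h̃_1·ĥ_2² − 2·h̃_2·ĥ_2 + 3·h̃_3)/(3·ĥ_1²·(ĥ_1+ĥ_2)), β := (h̃_1·ĥ_2·(ĥ_1+ĥ_2)·(2ĥ_1−ĥ_2) − h̃_2·(ĥ_1² − 2ĥ_2² + 2ĥ_1ĥ_2) − 3·h̃_3·(ĥ_2−ĥ_1))/(3·ĥ_1²·ĥ_2²),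 γ := h̃_1 − 3α(ĥ_1+ĥ_2) − 3βĥ_2. Then for every x ≥ b: α(x−a)³ + β(x−c)³ + γ(x−c)² + (1−α−β)(x−b)³ = (x−t_1)(x−t_2)(x−t_3). -/
/-!
Put `y = x - b`, so that `x - c = y + ĥ₂` and `x - a = y + ĥ₁ + ĥ₂`. Both sides are then monic
cubics in `y`, the right-hand side being `y³ + h̃₁ y² + h̃₂ y + h̃₃`. The definition of `γ` matches
the `y²`-coefficients, and after eliminating `γ` the remaining two coefficient equations form a
linear system in `α, β` with determinant `3 ĥ₁² ĥ₂² (ĥ₁ + ĥ₂) > 0`, whose solution by Cramer's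
rule is the given `α, β`.
-/

lemma truncatedCubic_expand (α β γ h1 h2 y : ℝ) :
    α * (y + (h1 + h2)) ^ 3 + β * (y + h2) ^ 3 + γ * (y + h2) ^ 2 + (1 - α - β) * y ^ 3 =
      y ^ 3 + (3 * α * (h1 + h2) + 3 * β * h2 + γ) * y ^ 2 +
        (3 * α * (h1 + h2) ^ 2 + 3 * β * h2 ^ 2 + 2 * γ * h2) * y +
        (α * (h1 + h2) ^ 3 + β * h2 ^ 3 + γ * h2 ^ 2) := by
  ring

lemma prod_sub_eq_cubic_in_sub (b t1 t2 t3 x : ℝ) :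
    (x - t1) * (x - t2) * (x - t3) =
      (x - b) ^ 3 + ((b - t1) + (b - t2) + (b - t3)) * (x - b) ^ 2 +
        ((b - t1) * (b - t2) + (b - t1) * (b - t3) + (b - t2) * (b - t3)) * (x - b) +
        (b - t1) * (b - t2) * (b - t3) := by
  ring

lemma truncatedCubic_coeffs_eq {h1 h2 g1 g2 g3 α β γ : ℝ}
    (hh1 : h1 ≠ 0) (hh2 : h2 ≠ 0) (hh12 : h1 + h2 ≠ 0)
    (hα : α = (g1 * h2 ^ 2 - 2 * g2 * h2 + 3 * g3) / (3 * h1 ^ 2 * (h1 + h2)))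
    (hβ : β = (g1 * h2 * (h1 + h2) * (2 * h1 - h2) -
        g2 * (h1 ^ 2 - 2 * h2 ^ 2 + 2 * h1 * h2) - 3 * g3 * (h2 - h1)) /
        (3 * h1 ^ 2 * h2 ^ 2))
    (hγ : γ = g1 - 3 * α * (h1 + h2) - 3 * β * h2) :
    3 * α * (h1 + h2) + 3 * β * h2 + γ = g1 ∧
      3 * α * (h1 + h2) ^ 2 + 3 * β * h2 ^ 2 + 2 * γ * h2 = g2 ∧
      α * (h1 + h2) ^ 3 + β * h2 ^ 3 + γ * h2 ^ 2 = g3 := by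
  subst hγ hα hβ
  refine ⟨by ring, ?_, ?_⟩ <;> field_simp <;> ring

/-- For `x ≥ b`, the truncated-power combination defining `φ_j` reproduces the
cubic `(x−t₁)(x−t₂)(x−t₃)` (the key algebraic identity behind (13)–(14)). -/
theorem statement10 (a c b t1 t2 t3 : ℝ) (hac : a < c) (hcb : c < b)
    (h1 h2 g1 g2 g3 α β γ : ℝ)
    (hh1 : h1 = c - a) (hh2 : h2 = b - c)
    (hg1 : g1 = (b - t1) + (b - t2) + (b - t3))
    (hg2 : g2 = (b - t1) * (b - t2) + (b - t1) * (b - t3) + (b - t2) * (b - t3))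
    (hg3 : g3 = (b - t1) * (b - t2) * (b - t3))
    (hα : α = (g1 * h2 ^ 2 - 2 * g2 * h2 + 3 * g3) / (3 * h1 ^ 2 * (h1 + h2)))
    (hβ : β = (g1 * h2 * (h1 + h2) * (2 * h1 - h2) -
        g2 * (h1 ^ 2 - 2 * h2 ^ 2 + 2 * h1 * h2) - 3 * g3 * (h2 - h1)) /
        (3 * h1 ^ 2 * h2 ^ 2))
    (hγ : γ = g1 - 3 * α * (h1 + h2) - 3 * β * h2) :
    ∀ x : ℝ, b ≤ x →
      α * (x - a) ^ 3 + β * (x - c) ^ 3 + γ * (x - c) ^ 2 +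
        (1 - α - β) * (x - b) ^ 3 = (x - t1) * (x - t2) * (x - t3) := by
  intro x _
  obtain ⟨e1, e2, e3⟩ := truncatedCubic_coeffs_eq (by rw [hh1]; linarith) (by rw [hh2]; linarith)
    (by rw [hh1, hh2]; linarith) hα hβ hγ
  have hxa : x - a = (x - b) + (h1 + h2) := by rw [hh1, hh2]; ring
  have hxc : x - c = (x - b) + h2 := by rw [hh2]; ring
  rw [hxa, hxc, truncatedCubic_expand, e1, e2, e3, prod_sub_eq_cubic_in_sub b, hg1, hg2, hg3]
end
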